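/- arXiv:2407.11872 — 7 statements merged into one kernel-verified Lean document; each statement's English description precedes it below -/
import Mathlib

section
/- Suppose each sub-market J_k is at a first-price pacing equilibrium (α(k), x(k)) with submitted budgets (b_i(k))_{i∈I} satisfying Σ_k b_i(k) = B_i for every buyer i, and let x* be any allocation with x*_{i,j} ≥ 0 and Σ_i x*_{i,j} ≤ 1 for all j. Then Σ_k Σ_i α_i(k) · Σ_{j∈J_k} v_{i,j} x*_{i,j} ≤ Σ_i B_i = B. -/
open Finset

/-- A first-price pacing equilibrium of the sub-market `Jk` with submitted budgets `b`. -/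
def IsPacingEq {I J : Type*} [Fintype I] [Fintype J]
    (v : I → J → ℝ) (Jk : Finset J) (b : I → ℝ)
    (α : I → ℝ) (x : I → J → ℝ) : Prop :=
  (∀ i, 0 < α i) ∧
  (∀ i, ∀ j ∈ Jk, 0 ≤ x i j ∧ x i j ≤ 1) ∧
  ∃ p : J → ℝ,
    (∀ j ∈ Jk, (∀ i, α i * v i j ≤ p j) ∧ ∃ i, α i * v i j = p j) ∧
    (∀ i, ∀ j ∈ Jk, 0 < x i j → α i * v i j = p j) ∧
    (∀ j ∈ Jk, ∑ i, x i j = 1) ∧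
    (∀ i, ∑ j ∈ Jk, p j * x i j = b i)

/-- If every sub-market is at a pacing equilibrium with budgets summing to the
total budgets, then for any feasible allocation `x*`,
`Σ_k Σ_i α_i(k) Σ_{j∈J_k} v_{i,j} x*_{i,j} ≤ Σ_i B_i`. -/
theorem statement2 {I J K : Type*} [Fintype I] [Fintype J] [Fintype K] [DecidableEq K]
    (B : I → ℝ) (v : I → J → ℝ) (owner : J → K)
    (hB : ∀ i, 0 < B i) (hv : ∀ i j, 0 ≤ v i j)
    (b : I → K → ℝ) (hbsum : ∀ i, ∑ k, b i k = B i)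
    (α : K → I → ℝ) (x : I → J → ℝ)
    (hpe : ∀ k, IsPacingEq v (univ.filter (fun j => owner j = k))
      (fun i => b i k) (α k) x)
    (xstar : I → J → ℝ)
    (hxs0 : ∀ i j, 0 ≤ xstar i j) (hxs1 : ∀ j, ∑ i, xstar i j ≤ 1) :
    ∑ k, ∑ i, α k i * ∑ j ∈ univ.filter (fun j => owner j = k), v i j * xstar i j ≤
      ∑ i, B i := by
  have key : ∀ k, ∑ i, α k i * ∑ j ∈ univ.filter (fun j => owner j = k),
      v i j * xstar i j ≤ ∑ i, b i k := by
    intro k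
    obtain ⟨hα, hx01, p, hp, hxp, hmc, hbc⟩ := hpe k
    set Jk := univ.filter (fun j => owner j = k)
    have hp0 : ∀ j ∈ Jk, 0 ≤ p j := by
      intro j hj
      obtain ⟨i, hi⟩ := (hp j hj).2
      exact hi ▸ mul_nonneg (hα i).le (hv i j)
    have step1 : ∑ i, α k i * ∑ j ∈ Jk, v i j * xstar i j ≤ ∑ j ∈ Jk, p j := by
      calc ∑ i, α k i * ∑ j ∈ Jk, v i j * xstar i j
          = ∑ j ∈ Jk, ∑ i, (α k i * v i j) * xstar i j := by
            rw [Finset.sum_comm]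
            exact Finset.sum_congr rfl fun i _ => by
              rw [Finset.mul_sum]; exact Finset.sum_congr rfl fun j _ => by ring
        _ ≤ ∑ j ∈ Jk, ∑ i, p j * xstar i j := by
            refine Finset.sum_le_sum fun j hj => Finset.sum_le_sum fun i _ =>
              mul_le_mul_of_nonneg_right ((hp j hj).1 i) (hxs0 i j)
        _ = ∑ j ∈ Jk, p j * ∑ i, xstar i j := by
            exact Finset.sum_congr rfl fun j _ => (Finset.mul_sum ..).symm
        _ ≤ ∑ j ∈ Jk, p j := by
            refine Finset.sum_le_sum fun j hj => ?_
            calc p j * ∑ i, xstar i j ≤ p j * 1 :=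
                  mul_le_mul_of_nonneg_left (hxs1 j) (hp0 j hj)
              _ = p j := mul_one _
    have step2 : ∑ j ∈ Jk, p j = ∑ i, b i k := by
      calc ∑ j ∈ Jk, p j = ∑ j ∈ Jk, p j * ∑ i, x i j := by
            exact Finset.sum_congr rfl fun j hj => by rw [hmc j hj, mul_one]
        _ = ∑ i, ∑ j ∈ Jk, p j * x i j := by
            rw [Finset.sum_comm]
            exact Finset.sum_congr rfl fun j _ => Finset.mul_sum ..
        _ = ∑ i, b i k := Finset.sum_congr rfl fun i _ => hbc i
    linarith
  calc ∑ k, ∑ i, α k i * ∑ j ∈ univ.filter (fun j => owner j = k), v i j * xstar i j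
      ≤ ∑ k, ∑ i, b i k := Finset.sum_le_sum fun k _ => key k
    _ = ∑ i, ∑ k, b i k := Finset.sum_comm
    _ = ∑ i, B i := Finset.sum_congr rfl fun i _ => hbsum i
end

section
/- Suppose each sub-market J_k is at a pacing equilibrium with additive boosts c restricted to J_k, with multipliers α_i(k), allocation x, and submitted budgets (b_i(k)) satisfying Σ_k b_i(k) = B_i for each buyer i. Let x* be any allocation with x*_{i,j} ≥ 0 and Σ_i x*_{i,j} ≤ 1 for all j. Then Σ_k Σ_i α_i(k) · Σ_{j∈J_k} v_{i,j} x*_{i,j} ≤ B + Σ_{i,j} c_{i,j} (x_{i,j} − x*_{i,j}), where B = Σ_i B_i. -/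
open Finset

/-- A pacing equilibrium with additive boosts `c` of the sub-market `Jk`
with submitted budgets `b`. -/
def IsBoostedPacingEq {I J : Type*} [Fintype I] [Fintype J]
    (v c : I → J → ℝ) (Jk : Finset J) (b : I → ℝ)
    (α : I → ℝ) (x : I → J → ℝ) : Prop :=
  (∀ i, 0 < α i) ∧
  (∀ i, ∀ j ∈ Jk, 0 ≤ x i j ∧ x i j ≤ 1) ∧
  ∃ p : J → ℝ,
    (∀ j ∈ Jk, (∀ i, α i * v i j + c i j ≤ p j) ∧ ∃ i, α i * v i j + c i j = p j) ∧
    (∀ i, ∀ j ∈ Jk, 0 < x i j → α i * v i j + c i j = p j) ∧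
    (∀ j ∈ Jk, ∑ i, x i j = 1) ∧
    (∀ i, ∑ j ∈ Jk, (p j - c i j) * x i j = b i)

/-- If every sub-market is at a boosted pacing equilibrium with budgets summing to the
total budgets, then for any feasible allocation `x*`,
`Σ_k Σ_i α_i(k) Σ_{j∈J_k} v_{i,j} x*_{i,j} ≤ B + Σ_{i,j} c_{i,j}(x_{i,j} − x*_{i,j})`. -/
theorem statement11 {I J K : Type*} [Fintype I] [Fintype J] [Fintype K] [DecidableEq K]
    (B : I → ℝ) (v c : I → J → ℝ) (owner : J → K)
    (hB : ∀ i, 0 < B i) (hv : ∀ i j, 0 ≤ v i j) (hc : ∀ i j, 0 ≤ c i j)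
    (b : I → K → ℝ) (hbsum : ∀ i, ∑ k, b i k = B i)
    (α : K → I → ℝ) (x : I → J → ℝ)
    (hpe : ∀ k, IsBoostedPacingEq v c (univ.filter (fun j => owner j = k))
      (fun i => b i k) (α k) x)
    (xstar : I → J → ℝ)
    (hxs0 : ∀ i j, 0 ≤ xstar i j) (hxs1 : ∀ j, ∑ i, xstar i j ≤ 1) :
    ∑ k, ∑ i, α k i * ∑ j ∈ univ.filter (fun j => owner j = k), v i j * xstar i j ≤
      (∑ i, B i) + ∑ i, ∑ j, c i j * (x i j - xstar i j) := by
  classical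
  set Jk : K → Finset J := fun k => univ.filter (fun j => owner j = k) with hJk
  -- per sub-market inequality
  have hk : ∀ k, ∑ i, α k i * ∑ j ∈ Jk k, v i j * xstar i j ≤
      (∑ i, b i k) + ∑ i, ∑ j ∈ Jk k, c i j * (x i j - xstar i j) := by
    intro k
    obtain ⟨hα, hx01, p, hp, hsupp, hfull, hbud⟩ := hpe k
    have hp0 : ∀ j ∈ Jk k, 0 ≤ p j := by
      intro j hj
      have h := (hp j hj).1
      obtain ⟨i, _⟩ := (hp j hj).2
      nlinarith [h i, hv i j, hc i j, (hα i).le]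
    -- rewrite LHS
    have e1 : ∑ i, α k i * ∑ j ∈ Jk k, v i j * xstar i j =
        ∑ j ∈ Jk k, ∑ i, (α k i * v i j) * xstar i j := by
      simp_rw [Finset.mul_sum, ← mul_assoc]
      exact Finset.sum_comm
    -- price of each sub-market
    have e4 : ∑ j ∈ Jk k, p j = (∑ i, b i k) + ∑ i, ∑ j ∈ Jk k, c i j * x i j := by
      have h1 : ∑ i, ∑ j ∈ Jk k, (p j - c i j) * x i j = ∑ i, b i k :=
        Finset.sum_congr rfl fun i _ => hbud i
      have h2 : ∑ i, ∑ j ∈ Jk k, (p j - c i j) * x i j =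
          ∑ j ∈ Jk k, p j - ∑ i, ∑ j ∈ Jk k, c i j * x i j := by
        simp_rw [sub_mul, Finset.sum_sub_distrib]
        congr 1
        rw [Finset.sum_comm]
        exact Finset.sum_congr rfl fun j hj => by
          rw [← Finset.mul_sum, hfull j hj, mul_one]
      linarith
    calc ∑ i, α k i * ∑ j ∈ Jk k, v i j * xstar i j
        = ∑ j ∈ Jk k, ∑ i, (α k i * v i j) * xstar i j := e1
      _ ≤ ∑ j ∈ Jk k, ∑ i, (p j - c i j) * xstar i j := by
          refine Finset.sum_le_sum fun j hj => Finset.sum_le_sum fun i _ => ?_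
          have := (hp j hj).1 i
          exact mul_le_mul_of_nonneg_right (by linarith) (hxs0 i j)
      _ = ∑ j ∈ Jk k, p j * (∑ i, xstar i j) - ∑ i, ∑ j ∈ Jk k, c i j * xstar i j := by
          simp_rw [sub_mul, Finset.sum_sub_distrib]
          congr 1
          · exact Finset.sum_congr rfl fun j _ => (Finset.mul_sum _ _ _).symm
          · exact Finset.sum_comm
      _ ≤ ∑ j ∈ Jk k, p j - ∑ i, ∑ j ∈ Jk k, c i j * xstar i j := by
          refine sub_le_sub_right (Finset.sum_le_sum fun j hj => ?_) _
          calc p j * (∑ i, xstar i j) ≤ p j * 1 :=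
                mul_le_mul_of_nonneg_left (hxs1 j) (hp0 j hj)
            _ = p j := mul_one _
      _ = (∑ i, b i k) + ∑ i, ∑ j ∈ Jk k, c i j * (x i j - xstar i j) := by
          rw [e4]
          simp_rw [mul_sub, Finset.sum_sub_distrib]
          ring
    -- combine over k
  calc ∑ k, ∑ i, α k i * ∑ j ∈ Jk k, v i j * xstar i j
      ≤ ∑ k, ((∑ i, b i k) + ∑ i, ∑ j ∈ Jk k, c i j * (x i j - xstar i j)) :=
        Finset.sum_le_sum fun k _ => hk k
    _ = (∑ i, B i) + ∑ i, ∑ j, c i j * (x i j - xstar i j) := by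
        rw [Finset.sum_add_distrib]
        congr 1
        · rw [Finset.sum_comm]
          exact Finset.sum_congr rfl fun i _ => hbsum i
        · rw [Finset.sum_comm]
          exact Finset.sum_congr rfl fun i _ =>
            Finset.sum_fiberwise _ owner (fun j => c i j * (x i j - xstar i j))
end

section
/- Let w* ∈ ℝ^I with w*_i > 0 for every buyer i, and let u* be implementable by seller k and maximize Σ_i B_i ln(u_i + w*_i) over all u implementable by seller k (this holds when w*_i and u*_i are buyer i's utilities from the other sellers and from seller k, respectively, at a competitive equilibrium of the whole market). Define seller k's revenue against w* as R_k(u) = Σ_i B_i · u_i/(u_i + w*_i). Then for every u implementable by seller k, R_k(u) ≤ 5 · R_k(u*): when all other sellers play their competitive-equilibrium allocations and buyers allocate budgets proportionally to utilities, no deviation of seller k earns more than 5 times its competitive-equilibrium revenue. -/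
open Finset

/-- A utility vector `u` is implementable by the seller owning the items `Jk`
if it arises from a feasible allocation of those items. -/
def Implementable {I J : Type*} [Fintype I] [Fintype J]
    (v : I → J → ℝ) (Jk : Finset J) (u : I → ℝ) : Prop :=
  ∃ x : I → J → ℝ, (∀ i j, 0 ≤ x i j) ∧ (∀ j ∈ Jk, ∑ i, x i j ≤ 1) ∧
    ∀ i, u i = ∑ j ∈ Jk, v i j * x i j

/-- Pointwise key inequality. -/
lemma ptwise (u s w : ℝ) (hu : 0 ≤ u) (hs : 0 ≤ s) (hw : 0 < w) :
    u / (u + w) ≤ 2 * ((u - s) / (u + s + 2 * w)) + 3 * (s / (s + w)) := by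
  have h1 : 0 < u + w := by linarith
  have h2 : 0 < u + s + 2 * w := by linarith
  have h3 : 0 < s + w := by linarith
  have key : 2 * ((u - s) / (u + s + 2 * w)) + 3 * (s / (s + w)) - u / (u + w) =
      (2 * (u - s) * (s + w) * (u + w) + 3 * s * (u + s + 2 * w) * (u + w)
        - u * (u + s + 2 * w) * (s + w)) / ((u + s + 2 * w) * (s + w) * (u + w)) := by
    field_simp
  have hnum : 0 ≤ 2 * (u - s) * (s + w) * (u + w) + 3 * s * (u + s + 2 * w) * (u + w)
      - u * (u + s + 2 * w) * (s + w) := by nlinarith [sq_nonneg u, sq_nonneg (u - s), mul_nonneg hu hs, mul_nonneg hu hw.le, mul_nonneg hs hw.le, sq_nonneg w, mul_nonneg (mul_nonneg hu hs) hw.le, mul_nonneg (mul_nonneg hu hu) hs, mul_nonneg (mul_nonneg hs hs) hu, mul_nonneg (mul_nonneg hs hw.le) hw.le, mul_nonneg (mul_nonneg hu hw.le) hw.le]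
  have hden : 0 < (u + s + 2 * w) * (s + w) * (u + w) := by positivity
  have := div_nonneg hnum hden.le
  linarith [key ▸ this]

/-- log gradient inequality: (x - y)/x ≤ log x - log y. -/
lemma log_grad (x y : ℝ) (hx : 0 < x) (hy : 0 < y) :
    (x - y) / x ≤ Real.log x - Real.log y := by
  have h := Real.log_le_sub_one_of_pos (show 0 < y / x by positivity)
  rw [Real.log_div hy.ne' hx.ne'] at h
  have : (x - y) / x = 1 - y / x := by field_simp
  rw [this]
  linarith

/-- Incentive ratio of sellers: if `u*` maximizes `Σ_i B_i ln(u_i + w*_i)` over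
utility vectors implementable by seller `k` (as the competitive-equilibrium
allocation does against the other sellers' equilibrium utilities `w*`), then no
implementable deviation earns seller `k` more than 5 times the proportional-rule
revenue of `u*`. -/
theorem statement12 {I J : Type*} [Fintype I] [Fintype J]
    (B : I → ℝ) (v : I → J → ℝ) (Jk : Finset J)
    (hB : ∀ i, 0 < B i) (hv : ∀ i j, 0 ≤ v i j)
    (wstar : I → ℝ) (hw : ∀ i, 0 < wstar i)
    (ustar : I → ℝ) (hustar : Implementable v Jk ustar)
    (hmax : ∀ u : I → ℝ, Implementable v Jk u →
      ∑ i, B i * Real.log (u i + wstar i) ≤ ∑ i, B i * Real.log (ustar i + wstar i)) :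
    ∀ u : I → ℝ, Implementable v Jk u →
      ∑ i, B i * (u i / (u i + wstar i)) ≤
        5 * ∑ i, B i * (ustar i / (ustar i + wstar i)) := by
  obtain ⟨xs, hxs0, hxs1, hxse⟩ := hustar
  have hus0 : ∀ i, 0 ≤ ustar i := fun i => by
    rw [hxse i]
    exact Finset.sum_nonneg fun j _ => mul_nonneg (hv i j) (hxs0 i j)
  intro u hu
  obtain ⟨x, hx0, hx1, hxe⟩ := hu
  have hu0 : ∀ i, 0 ≤ u i := fun i => by
    rw [hxe i]
    exact Finset.sum_nonneg fun j _ => mul_nonneg (hv i j) (hx0 i j)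
  -- the midpoint is implementable
  have hmid : Implementable v Jk (fun i => (u i + ustar i) / 2) := by
    refine ⟨fun i j => (x i j + xs i j) / 2, fun i j => by have := hx0 i j; have := hxs0 i j; linarith, fun j hj => ?_, fun i => ?_⟩
    · have h1 := hx1 j hj
      have h2 := hxs1 j hj
      rw [← Finset.sum_div, Finset.sum_add_distrib]
      linarith
    · show (u i + ustar i) / 2 = _
      rw [hxe i, hxse i, ← Finset.sum_add_distrib, Finset.sum_div]
      exact Finset.sum_congr rfl fun j _ => by ring
  -- first-order-type inequality
  have star : ∑ i, B i * ((u i - ustar i) / (u i + ustar i + 2 * wstar i)) ≤ 0 := by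
    have h1 : ∀ i ∈ Finset.univ (α := I),
        B i * ((u i - ustar i) / (u i + ustar i + 2 * wstar i)) ≤
        B i * (Real.log ((u i + ustar i) / 2 + wstar i) - Real.log (ustar i + wstar i)) := by
      intro i _
      apply mul_le_mul_of_nonneg_left _ (hB i).le
      have hx' : 0 < (u i + ustar i) / 2 + wstar i := by
        have := hu0 i; have := hus0 i; have := hw i; linarith
      have hy' : 0 < ustar i + wstar i := by have := hus0 i; have := hw i; linarith
      have heq : (u i - ustar i) / (u i + ustar i + 2 * wstar i) =
          (((u i + ustar i) / 2 + wstar i) - (ustar i + wstar i)) / ((u i + ustar i) / 2 + wstar i) := by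
        rw [div_eq_div_iff (by linarith) hx'.ne']
        ring
      rw [heq]
      exact log_grad _ _ hx' hy'
    calc ∑ i, B i * ((u i - ustar i) / (u i + ustar i + 2 * wstar i))
        ≤ ∑ i, B i * (Real.log ((u i + ustar i) / 2 + wstar i) - Real.log (ustar i + wstar i)) :=
          Finset.sum_le_sum h1
      _ = (∑ i, B i * Real.log ((u i + ustar i) / 2 + wstar i))
            - ∑ i, B i * Real.log (ustar i + wstar i) := by
          rw [← Finset.sum_sub_distrib]
          exact Finset.sum_congr rfl fun i _ => by ring
      _ ≤ 0 := by
          have := hmax (fun i => (u i + ustar i) / 2) hmid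
          linarith
  have ptw : ∀ i ∈ Finset.univ (α := I), B i * (u i / (u i + wstar i)) ≤
      2 * (B i * ((u i - ustar i) / (u i + ustar i + 2 * wstar i)))
        + 3 * (B i * (ustar i / (ustar i + wstar i))) := by
    intro i _
    have key := ptwise (u i) (ustar i) (wstar i) (hu0 i) (hus0 i) (hw i)
    have := mul_le_mul_of_nonneg_left key (hB i).le
    nlinarith
  have Rstar0 : 0 ≤ ∑ i, B i * (ustar i / (ustar i + wstar i)) := by
    apply Finset.sum_nonneg
    intro i _
    have := hus0 i; have := hw i
    have : 0 ≤ ustar i / (ustar i + wstar i) := by positivity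
    exact mul_nonneg (hB i).le this
  calc ∑ i, B i * (u i / (u i + wstar i))
      ≤ ∑ i, (2 * (B i * ((u i - ustar i) / (u i + ustar i + 2 * wstar i)))
          + 3 * (B i * (ustar i / (ustar i + wstar i)))) := Finset.sum_le_sum ptw
    _ = 2 * (∑ i, B i * ((u i - ustar i) / (u i + ustar i + 2 * wstar i)))
          + 3 * ∑ i, B i * (ustar i / (ustar i + wstar i)) := by
        rw [Finset.sum_add_distrib, ← Finset.mul_sum, ← Finset.mul_sum]
    _ ≤ 5 * ∑ i, B i * (ustar i / (ustar i + wstar i)) := by linarith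
end

section
/- Let w* ∈ ℝ^I with w*_i > 0 for every buyer i, and let u* be implementable by seller k and maximize Σ_i B_i ln(u_i + w*_i) over all u implementable by seller k. If u is implementable by seller k and satisfies u_i ≥ u*_i/2 for every buyer i, then Σ_i B_i · u_i/(u_i + w*_i) ≤ 3 · Σ_i B_i · u*_i/(u*_i + w*_i). -/
/-!
Comparing `u*` with the midpoint `(u* + u) / 2`, which is again implementable, and using
`log t ≥ 1 - 1/t`, the optimality of `u*` yields `Σ_i B_i (u_i - u*_i) / (u_i + u*_i + 2w_i) ≤ 0`.
Each revenue term `u_i / (u_i + w_i)` is at most `3 u*_i / (u*_i + w_i)` plus twice the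
corresponding term of that nonpositive sum, and summing gives the bound.
-/

open Finset

section Implementable

variable {I J : Type*} [Fintype I] [Fintype J] {v : I → J → ℝ} {Jk : Finset J}

theorem Implementable.nonneg (hv : ∀ i j, 0 ≤ v i j) {u : I → ℝ}
    (hu : Implementable v Jk u) (i : I) : 0 ≤ u i := by
  obtain ⟨x, hx0, -, hux⟩ := hu
  rw [hux i]
  exact sum_nonneg fun j _ => mul_nonneg (hv i j) (hx0 i j)

theorem convex_setOf_implementable : Convex ℝ {u : I → ℝ | Implementable v Jk u} := by
  rintro u ⟨x, hx0, hx1, hux⟩ u' ⟨x', hx0', hx1', hux'⟩ a b ha hb hab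
  refine ⟨a • x + b • x', fun i j => ?_, fun j hj => ?_, fun i => ?_⟩
  · simp only [Pi.add_apply, Pi.smul_apply, smul_eq_mul]
    exact add_nonneg (mul_nonneg ha (hx0 i j)) (mul_nonneg hb (hx0' i j))
  · simp only [Pi.add_apply, Pi.smul_apply, smul_eq_mul, sum_add_distrib, ← mul_sum]
    nlinarith [hx1 j hj, hx1' j hj]
  · simp only [Pi.add_apply, Pi.smul_apply, smul_eq_mul, hux, hux', mul_sum, ← sum_add_distrib]
    exact sum_congr rfl fun j _ => by ring

end Implementable

theorem sub_div_add_le_log_midpoint_sub_log {x y : ℝ} (hx : 0 < x) (hy : 0 < y) :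
    (y - x) / (x + y) ≤ Real.log ((x + y) / 2) - Real.log x := by
  have hxy : 0 < x + y := by linarith
  have key := Real.one_sub_inv_le_log_of_pos (div_pos (half_pos hxy) hx)
  rw [Real.log_div (half_pos hxy).ne' hx.ne'] at key
  calc (y - x) / (x + y) = 1 - ((x + y) / 2 / x)⁻¹ := by field_simp; ring
    _ ≤ _ := key

theorem sum_mul_sub_div_nonpos_of_log_midpoint_le {I : Type*} [Fintype I]
    {B s u w : I → ℝ} (hB : ∀ i, 0 ≤ B i) (hs : ∀ i, 0 < s i + w i) (hu : ∀ i, 0 < u i + w i)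
    (hmid : ∑ i, B i * Real.log ((s i + u i) / 2 + w i) ≤ ∑ i, B i * Real.log (s i + w i)) :
    ∑ i, B i * ((u i - s i) / (u i + s i + 2 * w i)) ≤ 0 := by
  have hterm : ∀ i, B i * ((u i - s i) / (u i + s i + 2 * w i)) ≤
      B i * Real.log ((s i + u i) / 2 + w i) - B i * Real.log (s i + w i) := fun i => by
    rw [← mul_sub]
    refine mul_le_mul_of_nonneg_left ?_ (hB i)
    have h := sub_div_add_le_log_midpoint_sub_log (hs i) (hu i)
    rwa [add_sub_add_right_eq_sub, show s i + w i + (u i + w i) = u i + s i + 2 * w i by ring,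
      show (u i + s i + 2 * w i) / 2 = (s i + u i) / 2 + w i by ring] at h
  calc _ ≤ ∑ i, (B i * Real.log ((s i + u i) / 2 + w i) - B i * Real.log (s i + w i)) :=
        sum_le_sum fun i _ => hterm i
    _ ≤ 0 := by rw [sum_sub_distrib]; linarith

theorem div_add_le_three_mul_div_add_add_two_mul {a b w : ℝ} (ha : 0 ≤ a) (hb : 0 ≤ b)
    (hw : 0 < w) :
    b / (b + w) ≤ 3 * (a / (a + w)) + 2 * ((b - a) / (b + a + 2 * w)) := by
  have hbw : 0 < b + w := by linarith
  have haw : 0 < a + w := by linarith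
  have hbaw : 0 < b + a + 2 * w := by linarith
  rw [← mul_div_assoc, ← mul_div_assoc, div_add_div _ _ haw.ne' hbaw.ne',
    div_le_div_iff₀ hbw (mul_pos haw hbaw)]
  nlinarith [mul_nonneg (mul_nonneg ha hb) hw.le, mul_nonneg (mul_nonneg hb hb) ha,
    mul_nonneg (mul_nonneg hb hb) hw.le, mul_nonneg (mul_nonneg ha ha) hw.le,
    mul_nonneg (mul_nonneg ha hw.le) hw.le]

/-- If `u*` maximizes `Σ_i B_i ln(u_i + w*_i)` over utility vectors implementable by
seller `k`, then any implementable `u` with `u_i ≥ u*_i / 2` for every buyer earns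
revenue at most 3 times that of `u*`. -/
theorem statement13 {I J : Type*} [Fintype I] [Fintype J]
    (B : I → ℝ) (v : I → J → ℝ) (Jk : Finset J)
    (hB : ∀ i, 0 < B i) (hv : ∀ i j, 0 ≤ v i j)
    (wstar : I → ℝ) (hw : ∀ i, 0 < wstar i)
    (ustar : I → ℝ) (hustar : Implementable v Jk ustar)
    (hmax : ∀ u : I → ℝ, Implementable v Jk u →
      ∑ i, B i * Real.log (u i + wstar i) ≤ ∑ i, B i * Real.log (ustar i + wstar i)) :
    ∀ u : I → ℝ, Implementable v Jk u → (∀ i, ustar i / 2 ≤ u i) →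
      ∑ i, B i * (u i / (u i + wstar i)) ≤
        3 * ∑ i, B i * (ustar i / (ustar i + wstar i)) := by
  intro u hu _
  have hs := hustar.nonneg hv
  have hu' := hu.nonneg hv
  have hmid : Implementable v Jk fun i => (ustar i + u i) / 2 := by
    have h : Implementable v Jk ((1 / 2 : ℝ) • ustar + (1 / 2 : ℝ) • u) :=
      convex_setOf_implementable hustar hu (by norm_num) (by norm_num) (by norm_num)
    convert h using 1
    funext i; simp only [Pi.add_apply, Pi.smul_apply, smul_eq_mul]; ring
  have hopt := sum_mul_sub_div_nonpos_of_log_midpoint_le (fun i => (hB i).le)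
    (fun i => by linarith [hs i, hw i]) (fun i => by linarith [hu' i, hw i]) (hmax _ hmid)
  calc ∑ i, B i * (u i / (u i + wstar i))
      ≤ ∑ i, (3 * (B i * (ustar i / (ustar i + wstar i))) +
          2 * (B i * ((u i - ustar i) / (u i + ustar i + 2 * wstar i)))) :=
        sum_le_sum fun i _ => by
          have h := mul_le_mul_of_nonneg_left
            (div_add_le_three_mul_div_add_add_two_mul (hs i) (hu' i) (hw i)) (hB i).le
          linarith
    _ = 3 * ∑ i, B i * (ustar i / (ustar i + wstar i)) +
          2 * ∑ i, B i * ((u i - ustar i) / (u i + ustar i + 2 * wstar i)) := by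
        rw [sum_add_distrib, ← mul_sum, ← mul_sum]
    _ ≤ 3 * ∑ i, B i * (ustar i / (ustar i + wstar i)) := by linarith
end

section
/- Let u(·,·,†) be a utility profile with u_i(†) = Σ_k u_i(k,†) > 0 satisfying, for every seller k, the first-order optimality condition Σ_i B_i · (u_i(†) − u_i(k,†))/u_i(†)² · (u_i(k,*) − u_i(k,†)) ≤ 0 (this holds at the pure Nash equilibrium of the seller competition game), where u_i(k,*) are the per-seller utilities at a competitive equilibrium with u_i(*) = Σ_k u_i(k,*) > 0. Let Δ = max_{i,k} B_i(k,*)/B_i where B_i(k,*) = B_i · u_i(k,*)/u_i(*) is buyer i's competitive-equilibrium spend on seller k, and assume Δ < 1. Then the Nash social welfare satisfies Π_i (u_i(*))^{B_i/B} ≤ (1/(1−Δ)) · Π_i (u_i(†))^{B_i/B}; equivalently, the Nash social welfare at the pure Nash equilibrium of the seller competition game is at least a (1−Δ) fraction of the optimal (competitive-equilibrium) Nash social welfare. -/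
open Finset

/-- Fairness guarantee at the pure Nash equilibrium of the seller competition game:
if the profile `u(·,·,†)` satisfies every seller's first-order optimality condition
in the direction of the competitive-equilibrium profile `u(·,·,*)`, and
`Δ = max_{i,k} u_i(k,*)/u_i(*) < 1` is the maximum budget fraction a single seller
earns from a single buyer at the competitive equilibrium, then the Nash social
welfare at `†` is at least a `(1 − Δ)` fraction of the optimal one. -/
theorem statement16 {I K : Type*} [Fintype I] [Fintype K] [Nonempty I] [Nonempty K]
    (B : I → ℝ) (hB : ∀ i, 0 < B i)
    (udag ustar : I → K → ℝ)
    (hud : ∀ i k, 0 ≤ udag i k) (hus : ∀ i k, 0 ≤ ustar i k)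
    (hdpos : ∀ i, 0 < ∑ k, udag i k) (hspos : ∀ i, 0 < ∑ k, ustar i k)
    (hfoc : ∀ k, ∑ i, B i * (((∑ k', udag i k') - udag i k) / (∑ k', udag i k') ^ 2) *
      (ustar i k - udag i k) ≤ 0)
    (Δ : ℝ) (hΔ : Δ = ⨆ i, ⨆ k, ustar i k / ∑ k', ustar i k')
    (hΔ1 : Δ < 1) :
    ∏ i, (∑ k, ustar i k) ^ (B i / ∑ i', B i') ≤
      (1 / (1 - Δ)) * ∏ i, (∑ k, udag i k) ^ (B i / ∑ i', B i') := by
  classical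
  set U : I → ℝ := fun i => ∑ k, udag i k with hUdef
  set S : I → ℝ := fun i => ∑ k, ustar i k with hSdef
  have hUpos : ∀ i, 0 < U i := hdpos
  have hSpos : ∀ i, 0 < S i := hspos
  have hb : (0:ℝ) < ∑ i', B i' := Finset.sum_pos (fun i _ => hB i) univ_nonempty
  set b : ℝ := ∑ i', B i' with hbdef
  have h1Δ : 0 < 1 - Δ := by linarith
  -- per-pair bound: ustar i k ≤ Δ * S i
  have hΔik : ∀ i k, ustar i k ≤ Δ * S i := by
    intro i k
    have h1 : ustar i k / S i ≤ ⨆ k', ustar i k' / S i :=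
      le_ciSup (f := fun k' => ustar i k' / S i)
        (Set.Finite.bddAbove (Set.finite_range _)) k
    have h2 : (⨆ k', ustar i k' / S i) ≤ Δ := by
      rw [hΔ]
      exact le_ciSup (f := fun i' => ⨆ k', ustar i' k' / S i')
        (Set.Finite.bddAbove (Set.finite_range _)) i
    have h3 : ustar i k / S i ≤ Δ := h1.trans h2
    rw [div_le_iff₀ (hSpos i)] at h3
    linarith [h3]
  have hdU : ∀ i k, udag i k ≤ U i := by
    intro i k
    exact Finset.single_le_sum (fun k' _ => hud i k') (Finset.mem_univ k)
  -- key: (1-Δ) * ∑ B i * (S i / U i) ≤ b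
  have hkey : (1 - Δ) * ∑ i, B i * (S i / U i) ≤ b := by
    have Hsum : ∑ i, ∑ k, B i * ((U i - udag i k) / (U i) ^ 2) *
        (ustar i k - udag i k) ≤ 0 := by
      rw [Finset.sum_comm]
      exact Finset.sum_nonpos fun k _ => hfoc k
    have hper : ∀ i, B i * ((1 - Δ) * (S i / U i) - 1) ≤
        ∑ k, B i * ((U i - udag i k) / (U i) ^ 2) * (ustar i k - udag i k) := by
      intro i
      have hUi := hUpos i
      have hinner : ∀ k, (B i / (U i) ^ 2) * (U i * ustar i k - Δ * S i * udag i k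
          - U i * udag i k) ≤ B i * ((U i - udag i k) / (U i) ^ 2) * (ustar i k - udag i k) := by
        intro k
        have h1 : (U i - udag i k) * (ustar i k - udag i k)
            ≥ U i * ustar i k - Δ * S i * udag i k - U i * udag i k := by
          nlinarith [hud i k, hΔik i k, hus i k]
        have hU2 : (0:ℝ) < (U i) ^ 2 := by positivity
        have e1 : B i * ((U i - udag i k) / (U i) ^ 2) * (ustar i k - udag i k)
            = (B i / (U i) ^ 2) * ((U i - udag i k) * (ustar i k - udag i k)) := by
          field_simp
        rw [e1]
        have hBU : 0 ≤ B i / (U i) ^ 2 := div_nonneg (hB i).le (by positivity)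
        nlinarith [mul_le_mul_of_nonneg_left h1 hBU]
      calc B i * ((1 - Δ) * (S i / U i) - 1)
          = (B i / (U i) ^ 2) * (U i * S i - Δ * S i * U i - U i * U i) := by
            field_simp
        _ = ∑ k, (B i / (U i) ^ 2) * (U i * ustar i k - Δ * S i * udag i k
              - U i * udag i k) := by
            rw [← Finset.mul_sum]
            congr 1
            rw [Finset.sum_sub_distrib, Finset.sum_sub_distrib, ← Finset.mul_sum,
              ← Finset.mul_sum, ← Finset.mul_sum]
        _ ≤ ∑ k, B i * ((U i - udag i k) / (U i) ^ 2) * (ustar i k - udag i k) :=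
            Finset.sum_le_sum fun k _ => hinner k
    have hall : ∑ i, B i * ((1 - Δ) * (S i / U i) - 1) ≤ 0 :=
      (Finset.sum_le_sum fun i _ => hper i).trans Hsum
    have expand : ∑ i, B i * ((1 - Δ) * (S i / U i) - 1)
        = (1 - Δ) * (∑ i, B i * (S i / U i)) - b := by
      rw [Finset.mul_sum, hbdef, ← Finset.sum_sub_distrib]
      exact Finset.sum_congr rfl fun i _ => by ring
    linarith [expand ▸ hall]
  -- weighted AM-GM
  have hw : ∑ i, B i / b = 1 := by
    rw [← Finset.sum_div, ← hbdef, div_self hb.ne']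
  have amgm : ∏ i, (S i / U i) ^ (B i / b) ≤ ∑ i, (B i / b) * (S i / U i) :=
    Real.geom_mean_le_arith_mean_weighted Finset.univ _ _
      (fun i _ => div_nonneg (hB i).le hb.le) hw
      (fun i _ => div_nonneg (hSpos i).le (hUpos i).le)
  have h2 : ∑ i, (B i / b) * (S i / U i) ≤ 1 / (1 - Δ) := by
    have e : ∑ i, (B i / b) * (S i / U i) = (∑ i, B i * (S i / U i)) / b := by
      rw [Finset.sum_div]
      exact Finset.sum_congr rfl fun i _ => by ring
    rw [e, div_le_div_iff₀ hb h1Δ]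
    calc (∑ i, B i * (S i / U i)) * (1 - Δ)
        = (1 - Δ) * ∑ i, B i * (S i / U i) := by ring
      _ ≤ b := hkey
      _ = 1 * b := by ring
  have hratio : ∏ i, (S i / U i) ^ (B i / b) ≤ 1 / (1 - Δ) := amgm.trans h2
  have hsplit : ∏ i, (S i) ^ (B i / b)
      = (∏ i, (U i) ^ (B i / b)) * ∏ i, (S i / U i) ^ (B i / b) := by
    rw [← Finset.prod_mul_distrib]
    refine Finset.prod_congr rfl fun i _ => ?_
    rw [← Real.mul_rpow (hUpos i).le (div_nonneg (hSpos i).le (hUpos i).le)]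
    rw [mul_div_cancel₀ _ (hUpos i).ne']
  have hUprod : 0 ≤ ∏ i, (U i) ^ (B i / b) :=
    Finset.prod_nonneg fun i _ => Real.rpow_nonneg (hUpos i).le _
  calc ∏ i, (S i) ^ (B i / b)
      = (∏ i, (U i) ^ (B i / b)) * ∏ i, (S i / U i) ^ (B i / b) := hsplit
    _ ≤ (∏ i, (U i) ^ (B i / b)) * (1 / (1 - Δ)) :=
        mul_le_mul_of_nonneg_left hratio hUprod
    _ = (1 / (1 - Δ)) * ∏ i, (U i) ^ (B i / b) := by ring
end

section
/- Under the hypotheses of the Nash-social-welfare bound — u_i(†) = Σ_k u_i(k,†) > 0, u_i(*) = Σ_k u_i(k,*) > 0, for every seller k the first-order condition Σ_i B_i · (u_i(†) − u_i(k,†))/u_i(†)² · (u_i(k,*) − u_i(k,†)) ≤ 0 holds, and Δ = max_{i,k} u_i(k,*)/u_i(*) — one has (1 − Δ) · Σ_i B_i · u_i(*)/u_i(†) ≤ B, where B = Σ_i B_i. -/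
open Finset

/-- Key estimate behind the Nash-social-welfare bound: under the sellers'
first-order optimality conditions at the pure Nash equilibrium profile `u(·,·,†)`
in the direction of the competitive-equilibrium profile `u(·,·,*)`, and with
`Δ = max_{i,k} u_i(k,*)/u_i(*)`, one has `(1 − Δ) Σ_i B_i u_i(*)/u_i(†) ≤ B`. -/
theorem statement17 {I K : Type*} [Fintype I] [Fintype K] [Nonempty I] [Nonempty K]
    (B : I → ℝ) (hB : ∀ i, 0 < B i)
    (udag ustar : I → K → ℝ)
    (hud : ∀ i k, 0 ≤ udag i k) (hus : ∀ i k, 0 ≤ ustar i k)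
    (hdpos : ∀ i, 0 < ∑ k, udag i k) (hspos : ∀ i, 0 < ∑ k, ustar i k)
    (hfoc : ∀ k, ∑ i, B i * (((∑ k', udag i k') - udag i k) / (∑ k', udag i k') ^ 2) *
      (ustar i k - udag i k) ≤ 0)
    (Δ : ℝ) (hΔ : Δ = ⨆ i, ⨆ k, ustar i k / ∑ k', ustar i k') :
    (1 - Δ) * ∑ i, B i * ((∑ k, ustar i k) / ∑ k, udag i k) ≤ ∑ i, B i := by
  have hΔb : ∀ i k, ustar i k ≤ Δ * ∑ k', ustar i k' := by
    intro i k
    have h1 : ustar i k / ∑ k', ustar i k' ≤ Δ := by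
      rw [hΔ]
      have hb1 : BddAbove (Set.range fun k => ustar i k / ∑ k', ustar i k') :=
        Set.Finite.bddAbove (Set.finite_range _)
      have hb2 : BddAbove (Set.range fun i => ⨆ k, ustar i k / ∑ k', ustar i k') :=
        Set.Finite.bddAbove (Set.finite_range _)
      exact le_trans (le_ciSup hb1 k) (le_ciSup hb2 i)
    have hs := hspos i
    calc ustar i k = (ustar i k / ∑ k', ustar i k') * ∑ k', ustar i k' := by
          field_simp
      _ ≤ Δ * ∑ k', ustar i k' := mul_le_mul_of_nonneg_right h1 hs.le
  have key : ∀ i, (1 - Δ) * (B i * ((∑ k, ustar i k) / ∑ k, udag i k))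
      ≤ B i + ∑ k, B i * (((∑ k', udag i k') - udag i k) / (∑ k', udag i k') ^ 2) *
        (ustar i k - udag i k) := by
    intro i
    have hUpos := hdpos i
    have hSpos := hspos i
    set u := ∑ k, udag i k with hu
    set s := ∑ k, ustar i k with hs
    have hu0 : u ≠ 0 := ne_of_gt hUpos
    set T := ∑ k, udag i k * ustar i k with hTdef
    set Q := ∑ k, udag i k * udag i k with hQdef
    have hT : T ≤ Δ * s * u := by
      calc T ≤ ∑ k, udag i k * (Δ * s) :=
            Finset.sum_le_sum fun k _ => mul_le_mul_of_nonneg_left (hΔb i k) (hud i k)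
        _ = Δ * s * u := by rw [← Finset.sum_mul, hu]; ring
    have hQ : 0 ≤ Q :=
      Finset.sum_nonneg fun k _ => mul_nonneg (hud i k) (hud i k)
    have hE : ∑ k, B i * ((u - udag i k) / u ^ 2) * (ustar i k - udag i k)
        = B i / u ^ 2 * (u * s - u * u - T + Q) := by
      have hterm : ∀ k ∈ Finset.univ, B i * ((u - udag i k) / u ^ 2) * (ustar i k - udag i k)
          = B i / u ^ 2 * (u * ustar i k - u * udag i k - udag i k * ustar i k
            + udag i k * udag i k) := fun k _ => by ring
      rw [Finset.sum_congr rfl hterm, ← Finset.mul_sum]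
      congr 1
      rw [Finset.sum_add_distrib, Finset.sum_sub_distrib, Finset.sum_sub_distrib,
        ← Finset.mul_sum, ← Finset.mul_sum, ← hu, ← hs, ← hTdef, ← hQdef]
    rw [hE, ← sub_nonneg]
    have heq : B i + B i / u ^ 2 * (u * s - u * u - T + Q) - (1 - Δ) * (B i * (s / u))
        = B i / u ^ 2 * (Δ * s * u - T + Q) := by
      field_simp
      ring
    rw [heq]
    have h1 : (0:ℝ) ≤ B i / u ^ 2 := div_nonneg (hB i).le (sq_nonneg u)
    have h2 : (0:ℝ) ≤ Δ * s * u - T + Q := by linarith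
    exact mul_nonneg h1 h2
  calc (1 - Δ) * ∑ i, B i * ((∑ k, ustar i k) / ∑ k, udag i k)
      = ∑ i, (1 - Δ) * (B i * ((∑ k, ustar i k) / ∑ k, udag i k)) := Finset.mul_sum _ _ _
    _ ≤ ∑ i, (B i + ∑ k, B i * (((∑ k', udag i k') - udag i k) / (∑ k', udag i k') ^ 2) *
        (ustar i k - udag i k)) := Finset.sum_le_sum fun i _ => key i
    _ = ∑ i, B i + ∑ i, ∑ k, B i * (((∑ k', udag i k') - udag i k) / (∑ k', udag i k') ^ 2) *
        (ustar i k - udag i k) := Finset.sum_add_distrib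
    _ ≤ ∑ i, B i := by
        have : ∑ i, ∑ k, B i * (((∑ k', udag i k') - udag i k) / (∑ k', udag i k') ^ 2) *
            (ustar i k - udag i k) ≤ 0 := by
          rw [Finset.sum_comm]
          exact Finset.sum_nonpos fun k _ => hfoc k
        linarith
end

section
/- Let u(k,†) and u(k,*) be nonnegative utility profiles with u_i(†) = Σ_k u_i(k,†) > 0, and suppose for every seller k the first-order condition Σ_i B_i · (u_i(†) − u_i(k,†))/u_i(†)² · (u_i(k,*) − u_i(k,†)) ≤ 0 holds. Then Σ_k Σ_i B_i · (u_i(†) − u_i(k,†))/u_i(†)² · u_i(k,*) ≤ B, where B = Σ_i B_i. -/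
open Finset

/-- Summing the sellers' first-order optimality conditions: if the nonnegative
utility profiles `u(·,·,†)` (with positive totals) and `u(·,·,*)` satisfy, for every
seller `k`, `Σ_i B_i (u_i(†) − u_i(k,†))/u_i(†)² · (u_i(k,*) − u_i(k,†)) ≤ 0`, then
`Σ_k Σ_i B_i (u_i(†) − u_i(k,†))/u_i(†)² · u_i(k,*) ≤ B = Σ_i B_i`. -/
theorem statement18 {I K : Type*} [Fintype I] [Fintype K]
    (B : I → ℝ) (hB : ∀ i, 0 < B i)
    (udag ustar : I → K → ℝ)
    (hud : ∀ i k, 0 ≤ udag i k) (hus : ∀ i k, 0 ≤ ustar i k)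
    (hdpos : ∀ i, 0 < ∑ k, udag i k)
    (hfoc : ∀ k, ∑ i, B i * (((∑ k', udag i k') - udag i k) / (∑ k', udag i k') ^ 2) *
      (ustar i k - udag i k) ≤ 0) :
    ∑ k, ∑ i, B i * (((∑ k', udag i k') - udag i k) / (∑ k', udag i k') ^ 2) *
      ustar i k ≤ ∑ i, B i := by
  set S : I → ℝ := fun i => ∑ k', udag i k' with hS
  have h1 : ∑ k, ∑ i, B i * ((S i - udag i k) / (S i) ^ 2) * ustar i k
      ≤ ∑ k, ∑ i, B i * ((S i - udag i k) / (S i) ^ 2) * udag i k := by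
    have hsum : ∑ k, ∑ i, B i * ((S i - udag i k) / (S i) ^ 2) *
        (ustar i k - udag i k) ≤ 0 := by
      have : (0:ℝ) = ∑ _k : K, (0:ℝ) := by simp
      rw [this]
      exact Finset.sum_le_sum fun k _ => hfoc k
    have e : ∀ k : K, ∑ i, B i * ((S i - udag i k) / (S i) ^ 2) * (ustar i k - udag i k)
        = (∑ i, B i * ((S i - udag i k) / (S i) ^ 2) * ustar i k)
          - ∑ i, B i * ((S i - udag i k) / (S i) ^ 2) * udag i k := by
      intro k
      rw [← Finset.sum_sub_distrib]
      exact Finset.sum_congr rfl fun i _ => by ring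
    rw [Finset.sum_congr rfl fun k _ => e k, Finset.sum_sub_distrib] at hsum
    linarith
  have h2 : ∀ i, ∑ k, B i * ((S i - udag i k) / (S i) ^ 2) * udag i k ≤ B i := by
    intro i
    have hS2 : (0:ℝ) < (S i) ^ 2 := pow_pos (hdpos i) 2
    have e : ∀ k : K, B i * ((S i - udag i k) / (S i) ^ 2) * udag i k
        = (B i / (S i) ^ 2) * ((S i - udag i k) * udag i k) := fun k => by ring
    rw [Finset.sum_congr rfl fun k _ => e k, ← Finset.mul_sum]
    have hsum : ∑ k, (S i - udag i k) * udag i k = (S i) ^ 2 - ∑ k, (udag i k) ^ 2 := by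
      rw [Finset.sum_congr rfl (fun k _ => (sub_mul (S i) (udag i k) (udag i k))),
        Finset.sum_sub_distrib, ← Finset.mul_sum]
      have : ∑ k, udag i k = S i := rfl
      rw [this]
      ring_nf
    rw [hsum, div_mul_eq_mul_div, div_le_iff₀ hS2]
    have hq : 0 ≤ ∑ k, (udag i k) ^ 2 := Finset.sum_nonneg fun k _ => sq_nonneg _
    nlinarith [(hB i).le]
  calc ∑ k, ∑ i, B i * ((S i - udag i k) / (S i) ^ 2) * ustar i k
      ≤ ∑ k, ∑ i, B i * ((S i - udag i k) / (S i) ^ 2) * udag i k := h1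
    _ = ∑ i, ∑ k, B i * ((S i - udag i k) / (S i) ^ 2) * udag i k := Finset.sum_comm
    _ ≤ ∑ i, B i := Finset.sum_le_sum fun i _ => h2 i
end
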